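/- arXiv:1506.03362 — 5 statements merged into one kernel-verified Lean document; each statement's English description precedes it below -/
import Mathlib

section
/- For every non-integer real number x, π·cot(πx) = 1/x + Σ_{n=1}^∞ (1/(x+n) + 1/(x−n)). -/
lemma Complex.ofReal_mem_integerComplement {x : ℝ} (hx : ∀ k : ℤ, x ≠ (k : ℝ)) :
    (x : ℂ) ∈ Complex.integerComplement := by
  rintro ⟨k, hk⟩
  exact hx k (by exact_mod_cast hk.symm)

/-- Euler's partial fraction expansion of the cotangent: for every non-integer
real `x`, `π·cot(πx) = 1/x + ∑_{n=1}^∞ (1/(x+n) + 1/(x−n))`. -/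
theorem stmt_0 (x : ℝ) (hx : ∀ k : ℤ, x ≠ (k : ℝ)) :
    Real.pi * Real.cot (Real.pi * x) =
      1 / x + ∑' n : ℕ, (1 / (x + ((n : ℝ) + 1)) + 1 / (x - ((n : ℝ) + 1))) := by
  apply Complex.ofReal_injective
  have hseries := cot_series_rep' (Complex.ofReal_mem_integerComplement hx)
  push_cast [Complex.ofReal_tsum, Complex.ofReal_cot]
  rw [tsum_congr fun n => add_comm _ _, ← hseries, add_sub_cancel]
end

section
/- For every real number d that is not an integer, Σ_{n∈ℤ} 1/(n+d)² = π²·csc²(πd). -/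
/-!
The function `x ↦ exp (2πidx)` has modulus one, and on `[0, 1]` its `n`-th Fourier coefficient is
`(exp (2πid) - 1) / (2πi(d - n))`, whose squared modulus is `sin² (πd) / (π² (d - n)²)`.
Parseval's identity therefore gives `∑ₙ sin² (πd) / (π² (d - n)²) = 1`.
-/

open Complex Real MeasureTheory

lemma fourierCoeffOn_exp_mul {d : ℝ} {n : ℤ} (hdn : d ≠ n) :
    fourierCoeffOn zero_lt_one (fun x : ℝ => exp (2 * π * I * d * x)) n =
      (exp (2 * π * I * d) - 1) / (2 * π * I * (d - n)) := by
  set c : ℂ := 2 * π * I * (d - n)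
  have hc : c ≠ 0 := by
    have : (d : ℂ) - n ≠ 0 := sub_ne_zero.mpr (by exact_mod_cast hdn)
    simp [c, this, Real.pi_ne_zero, I_ne_zero]
  have hexp_c : exp c = exp (2 * π * I * d) := by
    rw [show c = 2 * π * I * d + (-n : ℤ) * (2 * π * I) by push_cast; ring, Complex.exp_add,
      exp_int_mul_two_pi_mul_I, mul_one]
  have hintegrand : ∀ x : ℝ,
      fourier (-n) (x : AddCircle (1 - 0 : ℝ)) • exp (2 * π * I * d * x) = exp (c * x) := by
    intro x
    rw [fourier_coe_apply, smul_eq_mul, ← Complex.exp_add]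
    congr 1
    push_cast
    ring
  rw [fourierCoeffOn_eq_integral]
  simp_rw [hintegrand]
  rw [integral_exp_mul_complex hc]
  simp [hexp_c]

lemma norm_sq_fourierCoeffOn_exp_mul {d : ℝ} {n : ℤ} (hdn : d ≠ n) :
    ‖fourierCoeffOn zero_lt_one (fun x : ℝ => exp (2 * π * I * d * x)) n‖ ^ 2 =
      Real.sin (π * d) ^ 2 / π ^ 2 / (d - n) ^ 2 := by
  have hnum : ‖exp (2 * π * I * d) - 1‖ = 2 * |Real.sin (π * d)| := by
    rw [show 2 * π * I * d = I * ((2 * π * d : ℝ) : ℂ) by push_cast; ring,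
      norm_exp_I_mul_ofReal_sub_one, show 2 * π * d / 2 = π * d by ring, norm_mul,
      Real.norm_eq_abs]
    norm_num
  have hden : ‖2 * π * I * ((d : ℂ) - n)‖ = 2 * π * |d - n| := by
    rw [show (d : ℂ) - n = ((d - n : ℝ) : ℂ) by push_cast; ring, norm_mul, Complex.norm_real,
      Real.norm_eq_abs]
    simp [abs_of_pos Real.pi_pos]
  have hdn' : d - n ≠ 0 := sub_ne_zero.mpr hdn
  rw [fourierCoeffOn_exp_mul hdn, norm_div, hnum, hden]
  field_simp
  simp only [sq_abs]
  ring

lemma hasSum_sin_sq_div_sq {d : ℝ} (hd : ∀ n : ℤ, d ≠ n) :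
    HasSum (fun n : ℤ => Real.sin (π * d) ^ 2 / π ^ 2 / (d - n) ^ 2) 1 := by
  have hnorm : ∀ x : ℝ, ‖exp (2 * π * I * d * x)‖ = 1 := fun x => by
    rw [show 2 * π * I * d * x = ((2 * π * d * x : ℝ) : ℂ) * I by push_cast; ring,
      norm_exp_ofReal_mul_I]
  have hL2 : MemLp (fun x : ℝ => exp (2 * π * I * d * x)) 2 (volume.restrict (Set.Ioc 0 1)) :=
    .of_bound (by fun_prop) 1 (ae_of_all _ fun x => (hnorm x).le)
  convert hasSum_sq_fourierCoeffOn zero_lt_one hL2 using 1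
  · exact funext fun n => (norm_sq_fourierCoeffOn_exp_mul (hd n)).symm
  · simp [hnorm]

lemma hasSum_one_div_add_sq {d : ℝ} (hd : ∀ n : ℤ, d ≠ n) :
    HasSum (fun n : ℤ => 1 / ((n : ℝ) + d) ^ 2) (π ^ 2 / Real.sin (π * d) ^ 2) := by
  have hsin : Real.sin (π * d) ≠ 0 := Real.sin_ne_zero_iff.mpr fun n h =>
    hd n (mul_left_cancel₀ Real.pi_ne_zero (by linarith))
  have h := (hasSum_sin_sq_div_sq hd).div_const (Real.sin (π * d) ^ 2 / π ^ 2)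
  rw [one_div_div] at h
  refine (Equiv.neg ℤ).hasSum_iff.mp (h.congr_fun fun n => ?_)
  rw [div_right_comm, div_self (by positivity)]
  simp [neg_add_eq_sub]

/-- For every real `d` that is not an integer, `∑_{n∈ℤ} 1/(n+d)² = π²·csc²(πd)`. -/
theorem stmt_2 (d : ℝ) (hd : ∀ k : ℤ, d ≠ (k : ℝ)) :
    ∑' n : ℤ, 1 / ((n : ℝ) + d) ^ 2 = Real.pi ^ 2 * (1 / Real.sin (Real.pi * d)) ^ 2 := by
  rw [(hasSum_one_div_add_sq hd).tsum_eq, one_div, inv_pow, div_eq_mul_inv]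
end

section
/- Schur's inequality: for all a, b ∈ ℓ²(ℤ), |Σ_{m∈ℤ} Σ_{n∈ℤ, n≠m} a_n·b_m/(m−n)| ≤ π·‖a‖_{ℓ²}·‖b‖_{ℓ²}; equivalently, the discrete Hilbert transform (H a)_m = (1/π)·Σ_{n≠m} a_n/(m−n) has ℓ²→ℓ² operator norm at most 1. -/
/-- The ℓ²-type norm of a sequence: `√(∑ |f m|²)`. -/
noncomputable def l2norm (f : ℤ → ℂ) : ℝ := Real.sqrt (∑' m : ℤ, ‖f m‖ ^ 2)

/-- The discrete Hilbert transform `(H a)_m = (1/π)·∑_{n≠m} a_n/(m−n)`. -/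
noncomputable def Hop (a : ℤ → ℂ) (m : ℤ) : ℂ :=
  (1 / (Real.pi : ℂ)) * ∑' n : {n : ℤ // n ≠ m}, a n.1 / ((m : ℂ) - (n.1 : ℂ))

/-- The shifted discrete Hilbert transform `(H_d a)_m = (1/π)·∑_{n≠m} a_n/(n−m+d)`. -/
noncomputable def Hdop (d : ℝ) (a : ℤ → ℂ) (m : ℤ) : ℂ :=
  (1 / (Real.pi : ℂ)) * ∑' n : {n : ℤ // n ≠ m}, a n.1 / ((n.1 : ℂ) - (m : ℂ) + (d : ℂ))

/-!
The kernel `1/j` (`j ≠ 0`, and `0` at `j = 0`) is the sequence of Fourier coefficients of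
`K(x) = -2πi B₁(x) = -2πi (x - 1/2)` on `[0, 1]`, and `|K| ≤ π` there. So for finitely supported
`a`, `b` the form `∑ₘ ∑ₙ bₘ aₙ / (m - n)` equals `∫₀¹ K P Q̄`, where `P`, `Q` are the trigonometric
polynomials with coefficients `a` and `b̄`; Cauchy–Schwarz and Parseval bound it by `π ‖a‖ ‖b‖`.
Taking for `b` the conjugate of the truncated transform gives `‖H a‖ ≤ ‖a‖` on finite supports,
hence on all of `ℓ²` by letting the supports grow, and the theorem is Cauchy–Schwarz in `ℓ²`.
-/

open Complex Finset Filter Topology intervalIntegral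
open scoped Real ComplexConjugate

lemma intervalIntegral_norm_mul_norm_le {E : Type*} [NormedAddCommGroup E] {f g : ℝ → E}
    (hf : Continuous f) (hg : Continuous g) {a b : ℝ} (hab : a ≤ b) :
    ∫ x in a..b, ‖f x‖ * ‖g x‖ ≤ √(∫ x in a..b, ‖f x‖ ^ 2) * √(∫ x in a..b, ‖g x‖ ^ 2) := by
  have memLp {h : ℝ → E} (hh : Continuous h) :
      MeasureTheory.MemLp h (ENNReal.ofReal 2) (MeasureTheory.volume.restrict (Set.Ioc a b)) := by
    rw [ENNReal.ofReal_ofNat, MeasureTheory.memLp_two_iff_integrable_sq_norm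
      hh.aestronglyMeasurable]
    exact (hh.norm.pow 2).integrableOn_Ioc
  simp only [integral_of_le hab, Real.sqrt_eq_rpow]
  simpa using MeasureTheory.integral_mul_norm_le_Lp_mul_Lq Real.HolderConjugate.two_two
    (memLp hf) (memLp hg)

lemma le_sq_of_le_mul_sqrt {x c : ℝ} (h : x ≤ c * √x) : x ≤ c ^ 2 := by
  rcases lt_or_ge x 0 with hx | hx
  · nlinarith
  nlinarith [Real.sq_sqrt hx, Real.sqrt_nonneg x]

lemma memℓp_two_iff {ι E : Type*} [NormedAddCommGroup E] {f : ι → E} : Memℓp f 2 ↔ Summable fun i => ‖f i‖ ^ 2 := by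
  simp [memℓp_gen_iff]

noncomputable def circleMode (n : ℤ) (x : ℝ) : ℂ := fourier n (x : UnitAddCircle)

lemma circleMode_eq (n : ℤ) (x : ℝ) : circleMode n x = exp (2 * π * I * n * x) := by
  simp [circleMode]

@[fun_prop]
lemma continuous_circleMode (n : ℤ) : Continuous (circleMode n) :=
  (fourier n).continuous.comp (AddCircle.continuous_mk' 1)

lemma circleMode_add (m n : ℤ) (x : ℝ) : circleMode (m + n) x = circleMode m x * circleMode n x :=
  fourier_add

lemma circleMode_neg (n : ℤ) (x : ℝ) : circleMode (-n) x = conj (circleMode n x) :=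
  fourier_neg

lemma integral_circleMode (n : ℤ) : ∫ x in (0 : ℝ)..1, circleMode n x = if n = 0 then 1 else 0 := by
  split_ifs with hn
  · simp [hn, circleMode]
  have hc : 2 * π * I * n ≠ 0 := by simp [Real.pi_ne_zero, I_ne_zero, hn]
  simp_rw [circleMode_eq, integral_exp_mul_complex hc, ofReal_one, ofReal_zero, mul_one, mul_zero,
    exp_zero]
  rw [show 2 * π * I * n = n * (2 * π * I) by ring, exp_int_mul_two_pi_mul_I, sub_self, zero_div]

noncomputable def trigPoly (t : Finset ℤ) (c : ℤ → ℂ) (x : ℝ) : ℂ := ∑ n ∈ t, c n * circleMode n x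

@[fun_prop]
lemma continuous_trigPoly (t : Finset ℤ) (c : ℤ → ℂ) : Continuous (trigPoly t c) := by
  unfold trigPoly; fun_prop

lemma integral_mul_trigPoly_mul_conj_trigPoly {g : ℝ → ℂ} (hg : Continuous g)
    (s t : Finset ℤ) (a b : ℤ → ℂ) :
    ∫ x in (0 : ℝ)..1, g x * (trigPoly t a x * conj (trigPoly s b x)) =
      ∑ m ∈ s, ∑ n ∈ t, conj (b m) * a n * ∫ x in (0 : ℝ)..1, g x * circleMode (-(m - n)) x := by
  have expand (x : ℝ) : g x * (trigPoly t a x * conj (trigPoly s b x)) =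
      ∑ m ∈ s, ∑ n ∈ t, conj (b m) * a n * (g x * circleMode (-(m - n)) x) := by
    rw [trigPoly, trigPoly, map_sum, sum_mul_sum, sum_comm, mul_sum]
    refine sum_congr rfl fun m _ => ?_
    rw [mul_sum]
    refine sum_congr rfl fun n _ => ?_
    rw [map_mul, neg_sub, sub_eq_add_neg, circleMode_add, circleMode_neg]
    ring
  simp_rw [expand]
  rw [integral_finsetSum fun m _ => (by fun_prop : Continuous _).intervalIntegrable _ _]
  refine sum_congr rfl fun m _ => ?_
  rw [integral_finsetSum fun n _ => (by fun_prop : Continuous _).intervalIntegrable _ _]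
  simp_rw [integral_const_mul]

lemma integral_norm_trigPoly_sq (t : Finset ℤ) (c : ℤ → ℂ) :
    ∫ x in (0 : ℝ)..1, ‖trigPoly t c x‖ ^ 2 = ∑ n ∈ t, ‖c n‖ ^ 2 := by
  have h := integral_mul_trigPoly_mul_conj_trigPoly (g := 1) continuous_const t t c c
  simp only [Pi.one_apply, one_mul, mul_conj, integral_circleMode, neg_eq_zero, sub_eq_zero,
    mul_ite, mul_one, mul_zero, sum_ite_eq, normSq_eq_norm_sq, integral_ofReal] at h
  rw [sum_congr rfl fun n hn => by rw [if_pos hn, conj_mul']] at h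
  exact_mod_cast h

noncomputable def hilbertSymbol (x : ℝ) : ℂ := -2 * π * I * bernoulliFun 1 x

@[fun_prop]
lemma continuous_hilbertSymbol : Continuous hilbertSymbol := by
  unfold hilbertSymbol; simp_rw [bernoulliFun_one]; fun_prop

lemma integral_circleMode_neg_mul_bernoulliFun_one (j : ℤ) :
    ∫ x in (0 : ℝ)..1, circleMode (-j) x * bernoulliFun 1 x = -1 / (2 * π * I * j) := by
  have h := bernoulliFourierCoeff_eq one_ne_zero j
  rw [bernoulliFourierCoeff, fourierCoeffOn_eq_integral, sub_zero] at h
  simp only [div_one, one_smul, smul_eq_mul, Nat.factorial_one, pow_one, Nat.cast_one] at h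
  exact h

lemma integral_hilbertSymbol_mul_circleMode_neg (j : ℤ) :
    ∫ x in (0 : ℝ)..1, hilbertSymbol x * circleMode (-j) x = (j : ℂ)⁻¹ := by
  simp_rw [hilbertSymbol, mul_assoc, integral_const_mul, mul_comm (bernoulliFun 1 _ : ℂ),
    integral_circleMode_neg_mul_bernoulliFun_one]
  rcases eq_or_ne j 0 with rfl | hj
  · simp
  · field_simp

lemma norm_hilbertSymbol_le {x : ℝ} (hx : x ∈ Set.Icc (0 : ℝ) 1) : ‖hilbertSymbol x‖ ≤ π := by
  have hx' : |x - 1 / 2| ≤ 1 / 2 := abs_le.mpr ⟨by linarith [hx.1], by linarith [hx.2]⟩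
  have h2π : ‖(-2 * π * I : ℂ)‖ = 2 * π := by simp [Real.pi_nonneg]
  rw [hilbertSymbol, bernoulliFun_one, norm_mul, h2π, norm_real, Real.norm_eq_abs]
  nlinarith [Real.pi_pos]

-- The diagonal terms `n = m` vanish because division by zero gives zero.
theorem norm_sum_sum_div_sub_le (s t : Finset ℤ) (a b : ℤ → ℂ) :
    ‖∑ m ∈ s, ∑ n ∈ t, b m * a n / (m - n)‖ ≤
      π * √(∑ n ∈ t, ‖a n‖ ^ 2) * √(∑ m ∈ s, ‖b m‖ ^ 2) := by
  set P := trigPoly t a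
  set Q := trigPoly s (conj b)
  have hsum : ∑ m ∈ s, ∑ n ∈ t, b m * a n / (m - n) =
      ∫ x in (0 : ℝ)..1, hilbertSymbol x * (P x * conj (Q x)) := by
    rw [integral_mul_trigPoly_mul_conj_trigPoly (by fun_prop)]
    simp_rw [integral_hilbertSymbol_mul_circleMode_neg, Pi.conj_apply, conj_conj, div_eq_mul_inv]
    push_cast
    rfl
  have hpoint : ∀ x ∈ Set.Ioc (0 : ℝ) 1,
      ‖hilbertSymbol x * (P x * conj (Q x))‖ ≤ π * (‖P x‖ * ‖Q x‖) := fun x hx => by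
    rw [norm_mul, norm_mul, RCLike.norm_conj]
    gcongr
    exact norm_hilbertSymbol_le (Set.Ioc_subset_Icc_self hx)
  calc ‖∑ m ∈ s, ∑ n ∈ t, b m * a n / (m - n)‖
      ≤ ∫ x in (0 : ℝ)..1, π * (‖P x‖ * ‖Q x‖) := by
        rw [hsum]
        exact norm_integral_le_of_norm_le zero_le_one (Eventually.of_forall hpoint)
          (Continuous.intervalIntegrable (by fun_prop) _ _)
    _ ≤ π * (√(∫ x in (0 : ℝ)..1, ‖P x‖ ^ 2) * √(∫ x in (0 : ℝ)..1, ‖Q x‖ ^ 2)) := by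
        rw [integral_const_mul]
        gcongr
        exact intervalIntegral_norm_mul_norm_le (by fun_prop) (by fun_prop) zero_le_one
    _ = π * √(∑ n ∈ t, ‖a n‖ ^ 2) * √(∑ m ∈ s, ‖b m‖ ^ 2) := by
        simp_rw [P, Q, integral_norm_trigPoly_sq, Pi.conj_apply, RCLike.norm_conj, mul_assoc]

lemma sum_norm_sum_div_sub_sq_le (s t : Finset ℤ) (a : ℤ → ℂ) :
    ∑ m ∈ s, ‖∑ n ∈ t, a n / (m - n)‖ ^ 2 ≤ π ^ 2 * ∑ n ∈ t, ‖a n‖ ^ 2 := by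
  set S : ℤ → ℂ := fun m => ∑ n ∈ t, a n / (m - n)
  have hS : ∑ m ∈ s, ∑ n ∈ t, conj (S m) * a n / (m - n) = ((∑ m ∈ s, ‖S m‖ ^ 2 : ℝ) : ℂ) := by
    push_cast
    refine sum_congr rfl fun m _ => ?_
    simp_rw [← conj_mul', mul_div_assoc, ← mul_sum, S]
  have h := norm_sum_sum_div_sub_le s t a (fun m => conj (S m))
  rw [hS, norm_real, Real.norm_of_nonneg (sum_nonneg fun m _ => sq_nonneg _)] at h
  simp only [RCLike.norm_conj] at h
  calc ∑ m ∈ s, ‖S m‖ ^ 2 ≤ (π * √(∑ n ∈ t, ‖a n‖ ^ 2)) ^ 2 := le_sq_of_le_mul_sqrt h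
    _ = π ^ 2 * ∑ n ∈ t, ‖a n‖ ^ 2 := by
      rw [mul_pow, Real.sq_sqrt (sum_nonneg fun n _ => sq_nonneg _)]

lemma norm_lp_mk_eq_l2norm {f : ℤ → ℂ} (hf : Memℓp f 2) :
    ‖(⟨f, hf⟩ : lp (fun _ : ℤ => ℂ) 2)‖ = l2norm f := by
  rw [lp.norm_eq_tsum_rpow (by norm_num), l2norm, Real.sqrt_eq_rpow]
  simp

lemma summable_norm_mul_and_tsum_le {f g : ℤ → ℂ} (hf : Memℓp f 2) (hg : Memℓp g 2) :
    (Summable fun n => ‖f n‖ * ‖g n‖) ∧ ∑' n, ‖f n‖ * ‖g n‖ ≤ l2norm f * l2norm g := by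
  simpa [norm_lp_mk_eq_l2norm] using
    lp.tsum_mul_le_mul_norm (by simpa using Real.HolderConjugate.two_two) ⟨f, hf⟩ ⟨g, hg⟩

lemma memℓp_inv_sub (m : ℤ) : Memℓp (fun n : ℤ => ((m : ℂ) - n)⁻¹) 2 := by
  rw [memℓp_two_iff]
  have hinj : Function.Injective (fun n : ℤ => m - n) := fun x y h => by simpa using h
  refine ((Real.summable_one_div_int_pow.mpr one_lt_two).comp_injective hinj).congr fun n => ?_
  simp [← Int.cast_sub]

lemma summable_div_sub {a : ℤ → ℂ} (ha : Memℓp a 2) (m : ℤ) :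
    Summable fun n : ℤ => a n / (m - n) := by
  refine Summable.of_norm ?_
  simpa [div_eq_mul_inv] using (summable_norm_mul_and_tsum_le ha (memℓp_inv_sub m)).1

lemma pi_mul_Hop (a : ℤ → ℂ) (m : ℤ) :
    π * Hop a m = ∑' n : {n : ℤ // n ≠ m}, a n.1 / ((m : ℂ) - (n.1 : ℂ)) := by
  rw [Hop, ← mul_assoc, mul_one_div_cancel (ofReal_ne_zero.mpr Real.pi_ne_zero), one_mul]

lemma pi_mul_Hop_eq_tsum (a : ℤ → ℂ) (m : ℤ) : π * Hop a m = ∑' n : ℤ, a n / (m - n) := by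
  rw [pi_mul_Hop]
  refine tsum_subtype_eq_of_support_subset (f := fun n : ℤ => a n / (m - n)) fun n hn => ?_
  rintro rfl
  simp at hn

lemma sum_norm_Hop_sq_le {a : ℤ → ℂ} (ha : Memℓp a 2) (s : Finset ℤ) :
    ∑ m ∈ s, ‖Hop a m‖ ^ 2 ≤ ∑' n, ‖a n‖ ^ 2 := by
  have hlim : Tendsto (fun t : Finset ℤ => ∑ m ∈ s, ‖∑ n ∈ t, a n / (m - n)‖ ^ 2)
      atTop (𝓝 (∑ m ∈ s, ‖π * Hop a m‖ ^ 2)) :=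
    tendsto_finsetSum s fun m _ => by
      rw [pi_mul_Hop_eq_tsum]
      exact ((summable_div_sub ha m).hasSum.norm).pow 2
  have hbound (t : Finset ℤ) :
      ∑ m ∈ s, ‖∑ n ∈ t, a n / (m - n)‖ ^ 2 ≤ π ^ 2 * ∑' n, ‖a n‖ ^ 2 := by
    refine (sum_norm_sum_div_sub_sq_le s t a).trans ?_
    gcongr
    exact (memℓp_two_iff.mp ha).sum_le_tsum t fun n _ => sq_nonneg _
  have h := le_of_tendsto' hlim hbound
  simp_rw [norm_mul, norm_real, Real.norm_of_nonneg Real.pi_nonneg, mul_pow, ← mul_sum] at h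
  exact le_of_mul_le_mul_left h (by positivity)

theorem memℓp_Hop {a : ℤ → ℂ} (ha : Memℓp a 2) : Memℓp (Hop a) 2 :=
  memℓp_two_iff.mpr (summable_of_sum_le (fun _ => sq_nonneg _) (sum_norm_Hop_sq_le ha))

theorem l2norm_Hop_le {a : ℤ → ℂ} (ha : Memℓp a 2) : l2norm (Hop a) ≤ l2norm a :=
  Real.sqrt_le_sqrt <|
    (memℓp_two_iff.mp (memℓp_Hop ha)).tsum_le_of_sum_le (sum_norm_Hop_sq_le ha)

/-- Schur's inequality: for `a, b ∈ ℓ²(ℤ)`,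
`|∑_m ∑_{n≠m} a_n b_m/(m−n)| ≤ π·‖a‖·‖b‖`. -/
theorem stmt_9 (a b : ℤ → ℂ) (ha : Memℓp a 2) (hb : Memℓp b 2) :
    ‖∑' m : ℤ, ∑' n : {n : ℤ // n ≠ m}, a n.1 * b m / ((m : ℂ) - (n.1 : ℂ))‖ ≤
      Real.pi * l2norm a * l2norm b := by
  have hinner (m : ℤ) : ∑' n : {n : ℤ // n ≠ m}, a n.1 * b m / ((m : ℂ) - (n.1 : ℂ)) =
      b m * (π * Hop a m) := by
    rw [pi_mul_Hop, ← tsum_mul_left]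
    exact tsum_congr fun n => by ring
  obtain ⟨hsum, hle⟩ := summable_norm_mul_and_tsum_le hb (memℓp_Hop ha)
  calc ‖∑' m : ℤ, ∑' n : {n : ℤ // n ≠ m}, a n.1 * b m / ((m : ℂ) - (n.1 : ℂ))‖
      = π * ‖∑' m, b m * Hop a m‖ := by
        simp_rw [hinner, mul_left_comm (b _), tsum_mul_left, norm_mul, norm_real,
          Real.norm_of_nonneg Real.pi_nonneg]
    _ ≤ π * ∑' m, ‖b m‖ * ‖Hop a m‖ := by
        gcongr
        simpa only [norm_mul] using
          norm_tsum_le_tsum_norm (f := fun m => b m * Hop a m) (by simpa only [norm_mul] using hsum)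
    _ ≤ π * (l2norm b * l2norm (Hop a)) := by gcongr
    _ ≤ π * (l2norm b * l2norm a) := by
        gcongr
        · exact Real.sqrt_nonneg _
        · exact l2norm_Hop_le ha
    _ = π * l2norm a * l2norm b := by ring
end

section
/- For real numbers s, t with s, t, s+t all non-integers, and every finitely supported sequence a, T_t(T_s(a)) = T_{s+t}(a), where (T_t a)_m = (sin(πt)/π)·Σ_{n∈ℤ} a_n/(m−n+t). -/
/-- The operator `T_t` for non-integer `t`:
`(T_t a)_m = (sin(πt)/π)·∑_{n∈ℤ} a_n/(m−n+t)`. -/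
noncomputable def Tns (t : ℝ) (a : ℤ → ℂ) (m : ℤ) : ℂ :=
  ((Real.sin (Real.pi * t) / Real.pi : ℝ) : ℂ) *
    ∑' n : ℤ, a n / ((m : ℂ) - (n : ℂ) + (t : ℂ))

/-!
For finitely supported `a`, both sides are finite combinations of the `a n`, and the claim
reduces to the partial-fraction identity
`∑ₖ 1 / ((x + k) (y - k)) = π (cot πx + cot πy) / (x + y)` (for `x`, `y` non-integers)
together with `sin x sin y (cot x + cot y) = sin (x + y)`. The series identity is Parseval's
formula on `[0, 1]` for `θ ↦ e^{2πixθ}` and `θ ↦ e^{2πiyθ}`: their Fourier coefficients are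
`(e^{2πix} - 1) / (2πi (x - n))`, and their product is `θ ↦ e^{2πi(x+y)θ}`.
-/

open Complex MeasureTheory
open scoped Real ComplexConjugate

section Parseval

variable {a b : ℝ} (hab : a < b)

theorem hasSum_fourierCoeffOn_conj_mul {f g : ℝ → ℂ}
    (hf : MemLp f 2 (volume.restrict (Set.Ioc a b)))
    (hg : MemLp g 2 (volume.restrict (Set.Ioc a b))) :
    HasSum (fun n => conj (fourierCoeffOn hab f n) * fourierCoeffOn hab g n)
      ((b - a)⁻¹ • ∫ x in a..b, conj (f x) * g x) := by
  have : Fact (0 < b - a) := ⟨sub_pos.2 hab⟩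
  have hIoc : Set.Ioc a (a + (b - a)) = Set.Ioc a b := by rw [add_sub_cancel]
  have hF : MemLp (AddCircle.liftIoc (b - a) a f) 2 AddCircle.haarAddCircle :=
    memLp_haarAddCircle_iff.2 (MemLp.memLp_liftIoc (hIoc ▸ hf))
  have hG : MemLp (AddCircle.liftIoc (b - a) a g) 2 AddCircle.haarAddCircle :=
    memLp_haarAddCircle_iff.2 (MemLp.memLp_liftIoc (hIoc ▸ hg))
  have hinner : inner ℂ (hF.toLp _) (hG.toLp _) = (b - a)⁻¹ • ∫ x in a..b, conj (f x) * g x :=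
    calc inner ℂ (hF.toLp _) (hG.toLp _)
        = ∫ x, AddCircle.liftIoc (b - a) a (fun x => conj (f x) * g x) x
            ∂AddCircle.haarAddCircle := by
          rw [L2.inner_def]
          refine integral_congr_ae ?_
          filter_upwards [hF.coeFn_toLp, hG.coeFn_toLp] with x hFx hGx
          rw [RCLike.inner_apply', hFx, hGx]
          rfl
      _ = (b - a)⁻¹ • ∫ x in a..b, conj (f x) * g x := by
          rw [AddCircle.integral_haarAddCircle, AddCircle.integral_liftIoc_eq_intervalIntegral,
            add_sub_cancel]
  have H := fourierBasis.hasSum_inner_mul_inner (hF.toLp _) (hG.toLp _)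
  simp only [← inner_conj_symm (hF.toLp _), ← HilbertBasis.repr_apply_apply, fourierBasis_repr,
    fourierCoeff_congr_ae hF.coeFn_toLp, fourierCoeff_congr_ae hG.coeFn_toLp] at H
  rwa [inner_conj_symm, hinner] at H

theorem fourierCoeffOn_conj (f : ℝ → ℂ) (n : ℤ) :
    fourierCoeffOn hab (fun x => conj (f x)) n = conj (fourierCoeffOn hab f (-n)) := by
  simp only [fourierCoeffOn_eq_integral, real_smul, map_mul, conj_ofReal,
    ← intervalIntegral.intervalIntegral_conj, neg_neg, smul_eq_mul, fourier_neg]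

theorem hasSum_fourierCoeffOn_neg_mul {f g : ℝ → ℂ}
    (hf : MemLp f 2 (volume.restrict (Set.Ioc a b)))
    (hg : MemLp g 2 (volume.restrict (Set.Ioc a b))) :
    HasSum (fun n => fourierCoeffOn hab f (-n) * fourierCoeffOn hab g n)
      ((b - a)⁻¹ • ∫ x in a..b, f x * g x) := by
  have hf' : MemLp (fun x => conj (f x)) 2 (volume.restrict (Set.Ioc a b)) := hf.star
  simpa only [fourierCoeffOn_conj, conj_conj] using hasSum_fourierCoeffOn_conj_mul hab hf' hg

end Parseval

theorem memLp_cexp_two_pi_I_mul (c : ℝ) (p : ENNReal) (μ : Measure ℝ) [IsFiniteMeasure μ] :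
    MemLp (fun x : ℝ => cexp (2 * π * I * c * x)) p μ := by
  refine MemLp.of_bound (by fun_prop : Continuous _).aestronglyMeasurable 1
    (ae_of_all _ fun x => ?_)
  simp [norm_exp]

theorem integral_cexp_two_pi_I_mul {c : ℂ} (hc : c ≠ 0) :
    ∫ x in (0:ℝ)..1, cexp (2 * π * I * c * x) = (cexp (2 * π * I * c) - 1) / (2 * π * I * c) := by
  have h : 2 * π * I * c ≠ 0 := by simp [hc, Real.pi_ne_zero, I_ne_zero]
  simpa using integral_exp_mul_complex h (a := 0) (b := 1)

theorem cexp_two_pi_I_mul_sub_intCast (c : ℂ) (n : ℤ) :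
    cexp (2 * π * I * (c - n)) = cexp (2 * π * I * c) := by
  rw [mul_sub, exp_sub, mul_comm _ (n : ℂ), exp_int_mul_two_pi_mul_I, div_one]

theorem fourierCoeffOn_cexp_two_pi_I_mul {c : ℂ} {n : ℤ} (hc : c ≠ n) :
    fourierCoeffOn zero_lt_one (fun x : ℝ => cexp (2 * π * I * c * x)) n
      = (cexp (2 * π * I * c) - 1) / (2 * π * I * (c - n)) := by
  rw [fourierCoeffOn_eq_integral, ← cexp_two_pi_I_mul_sub_intCast c n,
    ← integral_cexp_two_pi_I_mul (sub_ne_zero.2 hc)]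
  simp only [sub_zero, div_one, one_smul, fourier_coe_apply, smul_eq_mul, ← exp_add]
  congr 1 with x
  push_cast
  ring_nf

theorem cexp_two_pi_I_mul_ne_one {x : ℂ} (hx : ∀ k : ℤ, x ≠ k) : cexp (2 * π * I * x) ≠ 1 := by
  rw [Ne, exp_eq_one_iff]
  rintro ⟨k, hk⟩
  have h2πI : (2 * π * I : ℂ) ≠ 0 := by simp [Real.pi_ne_zero, I_ne_zero]
  exact hx k (mul_left_cancel₀ h2πI (by rw [hk]; ring))

theorem cot_pi_mul_sub_intCast (z : ℂ) (k : ℤ) : cot (π * (z - k)) = cot (π * z) := by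
  simp only [cot_pi_eq_exp_ratio, cexp_two_pi_I_mul_sub_intCast]

theorem pi_mul_cot_add_cot {x y : ℂ} (hx : cexp (2 * π * I * x) ≠ 1)
    (hy : cexp (2 * π * I * y) ≠ 1) :
    π * (cot (π * x) + cot (π * y)) = 2 * π * I * (cexp (2 * π * I * (x + y)) - 1) /
      ((cexp (2 * π * I * x) - 1) * (cexp (2 * π * I * y) - 1)) := by
  rw [cot_pi_eq_exp_ratio, cot_pi_eq_exp_ratio, mul_add (2 * π * I : ℂ), exp_add]
  generalize cexp (2 * π * I * x) = u at *
  generalize cexp (2 * π * I * y) = v at *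
  have hu : u - 1 ≠ 0 := sub_ne_zero.2 hx
  have hv : v - 1 ≠ 0 := sub_ne_zero.2 hy
  rw [← neg_sub u, ← neg_sub v]
  field_simp
  ring_nf
  rw [I_sq]
  ring

theorem hasSum_one_div_add_mul_sub {x y : ℝ} (hx : ∀ k : ℤ, x ≠ k) (hy : ∀ k : ℤ, y ≠ k)
    (hxy : x + y ≠ 0) :
    HasSum (fun k : ℤ => 1 / ((x + k) * (y - k) : ℂ))
      (π * (cot (π * x) + cot (π * y)) / (x + y)) := by
  have hx' : ∀ k : ℤ, (x : ℂ) ≠ k := fun k h => hx k (by exact_mod_cast h)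
  have hy' : ∀ k : ℤ, (y : ℂ) ≠ k := fun k h => hy k (by exact_mod_cast h)
  have hxy' : (x + y : ℂ) ≠ 0 := by exact_mod_cast hxy
  have hex := cexp_two_pi_I_mul_ne_one hx'
  have hey := cexp_two_pi_I_mul_ne_one hy'
  have h2πI : (2 * π * I : ℂ) ≠ 0 := by simp [Real.pi_ne_zero, I_ne_zero]
  set K : ℂ := (cexp (2 * π * I * x) - 1) * (cexp (2 * π * I * y) - 1) / (2 * π * I) ^ 2 with hK
  have hK0 : K ≠ 0 := div_ne_zero (mul_ne_zero (sub_ne_zero.2 hex) (sub_ne_zero.2 hey))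
    (pow_ne_zero 2 h2πI)
  have H := hasSum_fourierCoeffOn_neg_mul zero_lt_one (memLp_cexp_two_pi_I_mul x 2 _)
    (memLp_cexp_two_pi_I_mul y 2 _)
  have hterm : ∀ k : ℤ, fourierCoeffOn zero_lt_one (fun t : ℝ => cexp (2 * π * I * x * t)) (-k) *
      fourierCoeffOn zero_lt_one (fun t : ℝ => cexp (2 * π * I * y * t)) k
        = K * (1 / ((x + k) * (y - k))) := by
    intro k
    have hxk : (x + k : ℂ) ≠ 0 := by simpa [sub_eq_add_neg] using sub_ne_zero.2 (hx' (-k))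
    have hyk : (y - k : ℂ) ≠ 0 := sub_ne_zero.2 (hy' k)
    rw [fourierCoeffOn_cexp_two_pi_I_mul (hx' (-k)), fourierCoeffOn_cexp_two_pi_I_mul (hy' k), hK,
      Int.cast_neg, sub_neg_eq_add]
    field_simp
  have hval : (1 - 0 : ℝ)⁻¹ • ∫ t in (0:ℝ)..1, cexp (2 * π * I * x * t) * cexp (2 * π * I * y * t)
      = (cexp (2 * π * I * (x + y)) - 1) / (2 * π * I * (x + y)) := by
    rw [← integral_cexp_two_pi_I_mul hxy']
    simp only [sub_zero, inv_one, one_smul, ← exp_add]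
    congr 1 with t
    ring_nf
  have hsum : (cexp (2 * π * I * (x + y)) - 1) / (2 * π * I * (x + y))
      = K * (π * (cot (π * x) + cot (π * y)) / (x + y)) := by
    rw [pi_mul_cot_add_cot hex hey, hK]
    field_simp [sub_ne_zero.2 hex, sub_ne_zero.2 hey]
  rw [funext hterm, hval, hsum] at H
  exact (hasSum_mul_left_iff hK0).1 H

theorem sin_mul_sin_mul_cot_add_cot {x y : ℂ} (hx : sin x ≠ 0) (hy : sin y ≠ 0) :
    sin x * sin y * (cot x + cot y) = sin (x + y) := by
  rw [cot_eq_cos_div_sin, cot_eq_cos_div_sin, sin_add]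
  field_simp
  ring

theorem Tns_eq_sum {t : ℝ} {a : ℤ → ℂ} {F : Finset ℤ} (ha : Function.support a ⊆ F) (m : ℤ) :
    Tns t a m = (Real.sin (π * t) / π : ℝ) * ∑ n ∈ F, a n / (m - n + t) := by
  rw [Tns, tsum_eq_sum fun n hn => by rw [Function.notMem_support.1 (fun h => hn (ha h)), zero_div]]

theorem hasSum_Tns_div {s t : ℝ} (hs : ∀ k : ℤ, s ≠ k) (ht : ∀ k : ℤ, t ≠ k)
    (hst : ∀ k : ℤ, s + t ≠ k) {a : ℤ → ℂ} {F : Finset ℤ} (ha : Function.support a ⊆ F) (m : ℤ) :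
    HasSum (fun j : ℤ => Tns s a j / (m - j + t))
      ((Real.sin (π * s) / π : ℝ) *
        ∑ n ∈ F, a n * (π * (cot (π * s) + cot (π * t)) / (m - n + s + t))) := by
  simp_rw [Tns_eq_sum ha, mul_div_assoc, Finset.sum_div]
  refine HasSum.mul_left _ (hasSum_sum fun n _ => ?_)
  have hx : ∀ k : ℤ, s - n ≠ k := fun k h => hs (k + n) (by push_cast; linarith)
  have hy : ∀ k : ℤ, m + t ≠ k := fun k h => ht (k - m) (by push_cast; linarith)
  have hxy : (s - n) + (m + t) ≠ 0 := fun h => hst (n - m) (by push_cast; linarith)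
  have H := (hasSum_one_div_add_mul_sub hx hy hxy).mul_left (a n)
  push_cast at H
  rw [show (s - n : ℂ) = s - (n : ℤ) by rfl, cot_pi_mul_sub_intCast,
    show (m + t : ℂ) = t - ((-m : ℤ) : ℂ) by push_cast; ring, cot_pi_mul_sub_intCast] at H
  push_cast at H
  convert H using 1
  · funext j
    rw [div_div, mul_one_div]
    congr 1
    ring
  · ring

/-- Group law for non-integer parameters: if `s`, `t`, `s+t` are all non-integer and
`a` is finitely supported, then `T_t(T_s(a)) = T_{s+t}(a)`. -/
theorem stmt_10 (s t : ℝ) (hs : ∀ k : ℤ, s ≠ (k : ℝ)) (ht : ∀ k : ℤ, t ≠ (k : ℝ))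
    (hst : ∀ k : ℤ, s + t ≠ (k : ℝ)) (a : ℤ → ℂ) (ha : (Function.support a).Finite) :
    ∀ m : ℤ, Tns t (fun j => Tns s a j) m = Tns (s + t) a m := by
  intro m
  have hF : Function.support a ⊆ ha.toFinset := by simp
  have hsin : ∀ {x : ℝ}, (∀ k : ℤ, x ≠ k) → sin (π * x) ≠ 0 := fun hx =>
    sin_pi_mul_ne_zero fun ⟨k, hk⟩ => hx k (by exact_mod_cast hk.symm)
  have hconst : ((Real.sin (π * t) / π : ℝ) : ℂ) * (Real.sin (π * s) / π : ℝ) *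
      (π * (cot (π * s) + cot (π * t))) = (Real.sin (π * (s + t)) / π : ℝ) := by
    push_cast
    rw [mul_add (π : ℂ) s t, ← sin_mul_sin_mul_cot_add_cot (hsin hs) (hsin ht)]
    field_simp
  rw [Tns, (hasSum_Tns_div hs ht hst hF m).tsum_eq, Tns_eq_sum hF, ← hconst, Finset.mul_sum,
    Finset.mul_sum, Finset.mul_sum]
  refine Finset.sum_congr rfl fun n _ => ?_
  push_cast
  ring
end

section
/- For every integer s, every non-integer real d, and every finitely supported sequence a, T_s(T_d(a)) = T_{s+d}(a), where T is defined by (T_t a)_m = (sin(πt)/π)·Σ_{n∈ℤ} a_n/(m−n+t) for t ∉ ℤ and (T_t a)_m = (−1)^t·a_{m+t} for t ∈ ℤ. -/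
/-- For integer `s`, non-integer `d`, and finitely supported `a`,
`T_s(T_d(a)) = T_{s+d}(a)`, where `(T_s b)_m = (−1)^s·b_{m+s}` for integer `s`. -/
theorem stmt_11 (s : ℤ) (d : ℝ) (hd : ∀ k : ℤ, d ≠ (k : ℝ))
    (a : ℤ → ℂ) (ha : (Function.support a).Finite) :
    ∀ m : ℤ, ((-1 : ℂ) ^ s) * Tns d a (m + s) = Tns ((s : ℝ) + d) a m := by
  intro m
  unfold Tns
  have hsum : ∑' n : ℤ, a n / (((m + s : ℤ) : ℂ) - (n : ℂ) + (d : ℂ)) =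
      ∑' n : ℤ, a n / ((m : ℂ) - (n : ℂ) + (((s : ℝ) + d : ℝ) : ℂ)) := by
    apply tsum_congr
    intro n
    push_cast
    ring_nf
  rw [hsum]
  have hcoef : ((Real.sin (Real.pi * ((s : ℝ) + d)) / Real.pi : ℝ) : ℂ) =
      ((-1 : ℂ) ^ s) * ((Real.sin (Real.pi * d) / Real.pi : ℝ) : ℂ) := by
    have : Real.sin (Real.pi * ((s : ℝ) + d)) = (-1 : ℝ) ^ s * Real.sin (Real.pi * d) := by
      rw [mul_add, add_comm, mul_comm Real.pi (s : ℝ), Real.sin_add_int_mul_pi]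
    rw [this]
    push_cast
    ring
  rw [hcoef]
  ring
end
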